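/- arXiv:1603.01022 — 2 statements merged into one kernel-verified Lean document; each statement's English description precedes it below -/
import Mathlib

section
/- With δ ∈ (0,1), e_on ∈ (0,1), α = (1-δ)e_on/(δ(1-e_on)), α ≠ 1, and π_0(L) = (1-δ)(1-α)/(1 - α^L - δ(1-α)): if α < 1, then π_0(L) is strictly decreasing in L, and as L → ∞, π_0(L) → (1-δ)(1-α)/(1 - δ(1-α)); if α > 1, then π_0(L) → 0 as L → ∞. -/
open Filter

/-- Behavior of the energy-outage probability π_0(L) in the battery size L:
if α < 1 it is strictly decreasing in L with limit (1-δ)(1-α)/(1-δ(1-α));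
if α > 1 it tends to 0 as L → ∞. -/
theorem stmt_10 (δ e_on : ℝ) (hδ : 0 < δ ∧ δ < 1) (he : 0 < e_on ∧ e_on < 1) :
    let α := (1 - δ) * e_on / (δ * (1 - e_on))
    let π0 : ℕ → ℝ := fun L => (1 - δ) * (1 - α) / (1 - α ^ L - δ * (1 - α))
    α ≠ 1 →
    ((α < 1 →
      (∀ L M : ℕ, 2 ≤ L → L < M → π0 M < π0 L) ∧
      Tendsto π0 atTop (nhds ((1 - δ) * (1 - α) / (1 - δ * (1 - α))))) ∧
     (1 < α → Tendsto π0 atTop (nhds 0))) := by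
  obtain ⟨hδ0, hδ1⟩ := hδ
  obtain ⟨he0, he1⟩ := he
  intro α π0 hα1
  have hαpos : 0 < α := by
    exact div_pos (mul_pos (by linarith) he0) (mul_pos hδ0 (by linarith))
  constructor
  · intro hαlt
    have hc : 0 < (1 - δ) * (1 - α) := by nlinarith
    have hkey : α < 1 - δ * (1 - α) := by nlinarith
    have hd : ∀ L : ℕ, 1 ≤ L → 0 < 1 - α ^ L - δ * (1 - α) := by
      intro L hL
      have h1 : α ^ L ≤ α ^ 1 := pow_le_pow_of_le_one hαpos.le hαlt.le hL
      simp only [pow_one] at h1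
      linarith
    constructor
    · intro L M hL hLM
      have hL1 : 1 ≤ L := le_trans (by norm_num) hL
      have hpow : α ^ M < α ^ L := pow_lt_pow_right_of_lt_one₀ hαpos hαlt hLM
      have hdL := hd L hL1
      have hdM := hd M (le_trans hL1 hLM.le)
      show (1 - δ) * (1 - α) / (1 - α ^ M - δ * (1 - α)) <
           (1 - δ) * (1 - α) / (1 - α ^ L - δ * (1 - α))
      apply div_lt_div_of_pos_left hc hdL
      linarith
    · have hpow : Tendsto (fun L : ℕ => α ^ L) atTop (nhds 0) :=
        tendsto_pow_atTop_nhds_zero_of_lt_one hαpos.le hαlt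
      have hden : Tendsto (fun L : ℕ => 1 - α ^ L - δ * (1 - α)) atTop
          (nhds (1 - δ * (1 - α))) := by
        have := (tendsto_const_nhds (x := (1:ℝ)) (f := atTop)).sub hpow
        have h2 := this.sub (tendsto_const_nhds (x := δ * (1 - α)) (f := atTop))
        simpa using h2
      have hne : 1 - δ * (1 - α) ≠ 0 := by nlinarith
      have := (tendsto_const_nhds (x := (1 - δ) * (1 - α)) (f := atTop)).div hden hne
      exact this
  · intro hαgt
    have hpow : Tendsto (fun L : ℕ => α ^ L) atTop atTop :=
      tendsto_pow_atTop_atTop_of_one_lt hαgt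
    have hden : Tendsto (fun L : ℕ => 1 - α ^ L - δ * (1 - α)) atTop atBot := by
      have h1 : Tendsto (fun L : ℕ => -(α ^ L)) atTop atBot := tendsto_neg_atTop_atBot.comp hpow
      have h2 := tendsto_atBot_add_const_left atTop (1 - δ * (1 - α)) h1
      refine h2.congr (fun L => by ring)
    have hdenneg : Tendsto (fun L : ℕ => -(1 - α ^ L - δ * (1 - α))) atTop atTop :=
      tendsto_neg_atBot_atTop.comp hden
    have := hdenneg.inv_tendsto_atTop.const_mul (-((1 - δ) * (1 - α)))
    simp only [mul_zero] at this
    refine this.congr (fun L => ?_)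
    show -((1 - δ) * (1 - α)) * (-(1 - α ^ L - δ * (1 - α)))⁻¹ = _
    rw [← neg_inv]
    simp only [π0, div_eq_mul_inv]
    ring
end

section
/- For fixed L ≥ 2, e_on ∈ (0,1), consider π_0(δ) = (1-δ)(1-α(δ))/(1 - α(δ)^L - δ(1-α(δ))) with α(δ) = (1-δ)e_on/(δ(1-e_on)), defined for δ ∈ (e_on, 1) (so α < 1). Then π_0(δ) is strictly increasing and continuous in δ on (e_on, 1), with limit (1-e_on)/(L-e_on) as δ → e_on⁺. -/
open Filter

/-- For fixed L ≥ 2 and e_on ∈ (0,1), the energy-outage probability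
π_0(δ) = (1-δ)(1-α(δ))/(1 - α(δ)^L - δ(1-α(δ))), with
α(δ) = (1-δ)e_on/(δ(1-e_on)), on δ ∈ (e_on,1) is strictly increasing,
continuous, and tends to (1-e_on)/(L-e_on) as δ → e_on⁺. -/
theorem stmt_19 (L : ℕ) (hL : 2 ≤ L) (e_on : ℝ) (he : 0 < e_on ∧ e_on < 1) :
    let α : ℝ → ℝ := fun δ => (1 - δ) * e_on / (δ * (1 - e_on))
    let π0 : ℝ → ℝ := fun δ =>
      (1 - δ) * (1 - α δ) / (1 - (α δ) ^ L - δ * (1 - α δ))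
    StrictMonoOn π0 (Set.Ioo e_on 1) ∧
    ContinuousOn π0 (Set.Ioo e_on 1) ∧
    Tendsto π0 (nhdsWithin e_on (Set.Ioi e_on))
      (nhds ((1 - e_on) / ((L : ℝ) - e_on))) := by
  obtain ⟨he0, he1⟩ := he
  intro α π0
  have h1e : (0:ℝ) < 1 - e_on := by linarith
  set S : ℝ → ℝ := fun δ => ∑ k ∈ Finset.range (L-1), (α δ)^k with hSdef
  set f : ℝ → ℝ := fun δ => δ*(1-e_on)/(δ*(1-e_on) + e_on * S δ) with hfdef
  -- basic facts about α on Ioo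
  have hαpos : ∀ δ ∈ Set.Ioo e_on 1, 0 < α δ := by
    intro δ hδ
    obtain ⟨h1, h2⟩ := hδ
    have hδ0 : 0 < δ := lt_trans he0 h1
    apply div_pos (by nlinarith) (by positivity)
  have hαlt : ∀ δ ∈ Set.Ioo e_on 1, α δ < 1 := by
    intro δ hδ
    obtain ⟨h1, h2⟩ := hδ
    have hδ0 : 0 < δ := lt_trans he0 h1
    rw [div_lt_one (by positivity)]
    nlinarith
  have hα_anti : ∀ x ∈ Set.Ioo e_on 1, ∀ y ∈ Set.Ioo e_on 1, x < y → α y < α x := by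
    intro x hx y hy hxy
    have hx0 : 0 < x := lt_trans he0 hx.1
    have hy0 : 0 < y := lt_trans he0 hy.1
    rw [div_lt_div_iff₀ (by positivity) (by positivity)]
    nlinarith [mul_pos he0 h1e, mul_pos (mul_pos he0 h1e) (sub_pos.mpr hxy)]
  have hSone : ∀ δ, 0 < α δ → 1 ≤ S δ := by
    intro δ hδ
    have h0 : (0:ℕ) ∈ Finset.range (L-1) := by
      simp [Finset.mem_range]; omega
    calc (1:ℝ) = (α δ)^0 := by simp
    _ ≤ S δ := Finset.single_le_sum (f := fun k => (α δ)^k)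
        (fun i _ => by positivity) h0
  have hDpos : ∀ δ ∈ Set.Ioo e_on 1, 0 < δ*(1-e_on) + e_on * S δ := by
    intro δ hδ
    have hδ0 : 0 < δ := lt_trans he0 hδ.1
    have := hSone δ (hαpos δ hδ)
    nlinarith
  -- key identity
  have hkey : ∀ δ ∈ Set.Ioo e_on 1, π0 δ = f δ := by
    intro δ hδ
    obtain ⟨h1, h2⟩ := hδ
    have hδ0 : 0 < δ := lt_trans he0 h1
    have ha0 : 0 < α δ := hαpos δ ⟨h1, h2⟩
    have ha1 : α δ < 1 := hαlt δ ⟨h1, h2⟩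
    have hS1 : 1 ≤ S δ := hSone δ ha0
    have haδ : α δ * (δ*(1-e_on)) = (1-δ)*e_on := by
      show (1 - δ) * e_on / (δ * (1 - e_on)) * (δ*(1-e_on)) = (1-δ)*e_on
      field_simp
    have hgeom : 1 - (α δ)^L = (1 - α δ) * (1 + α δ * S δ) := by
      have h := geom_sum_mul (α δ) L
      have hLs : L = (L-1) + 1 := by omega
      have h2 : ∑ i ∈ Finset.range L, (α δ)^i = α δ * S δ + 1 := by
        rw [hLs, geom_sum_succ]
      nlinarith [h, h2]
    have hden : 1 - (α δ)^L - δ * (1 - α δ) = (1 - α δ) * (1 - δ + α δ * S δ) := by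
      rw [hgeom]; ring
    show (1 - δ) * (1 - α δ) / (1 - (α δ) ^ L - δ * (1 - α δ)) = f δ
    rw [hden]
    have hne : (1 : ℝ) - α δ ≠ 0 := by linarith
    have h3 : (1 - δ) * (1 - α δ) / ((1 - α δ) * (1 - δ + α δ * S δ))
        = (1 - δ) / (1 - δ + α δ * S δ) := by
      rw [mul_comm (1-δ) (1 - α δ), mul_div_mul_left _ _ hne]
    rw [h3, hfdef]
    have hd1 : (0:ℝ) < 1 - δ + α δ * S δ := by nlinarith
    have hd2 : (0:ℝ) < δ*(1-e_on) + e_on * S δ := hDpos δ ⟨h1, h2⟩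
    rw [div_eq_div_iff (by linarith) (by linarith)]
    linear_combination (- S δ) * haδ
  -- strict monotonicity
  have hmono : StrictMonoOn π0 (Set.Ioo e_on 1) := by
    intro x hx y hy hxy
    rw [hkey x hx, hkey y hy]
    have hx0 : 0 < x := lt_trans he0 hx.1
    have hy0 : 0 < y := lt_trans he0 hy.1
    have hDx := hDpos x hx
    have hDy := hDpos y hy
    have hSyx : S y ≤ S x := by
      apply Finset.sum_le_sum
      intro i _
      exact pow_le_pow_left₀ (le_of_lt (hαpos y hy)) (le_of_lt (hα_anti x hx y hy hxy)) i
    have hSy1 : 1 ≤ S y := hSone y (hαpos y hy)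
    show x*(1-e_on)/(x*(1-e_on) + e_on * S x) < y*(1-e_on)/(y*(1-e_on) + e_on * S y)
    rw [div_lt_div_iff₀ hDx hDy]
    have hx' : x * S y < y * S x := by
      calc x * S y < y * S y := by nlinarith
      _ ≤ y * S x := by nlinarith
    nlinarith [mul_pos he0 h1e]
  refine ⟨hmono, ?_, ?_⟩
  -- continuity
  · have hfc : ContinuousOn f (Set.Ioo e_on 1) := by
      apply ContinuousOn.div
      · fun_prop
      · apply ContinuousOn.add
        · fun_prop
        · apply ContinuousOn.mul continuousOn_const
          apply continuousOn_finset_sum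
          intro i _
          apply ContinuousOn.pow
          apply ContinuousOn.div (by fun_prop) (by fun_prop)
          intro δ hδ
          have hδ0 : 0 < δ := lt_trans he0 hδ.1
          positivity
      · intro δ hδ
        exact ne_of_gt (hDpos δ hδ)
    exact ContinuousOn.congr hfc hkey
  -- limit
  · have hαe : α e_on = 1 := by
      show (1 - e_on) * e_on / (e_on * (1 - e_on)) = 1
      field_simp
    have hSe : S e_on = (L:ℝ) - 1 := by
      show (∑ k ∈ Finset.range (L-1), (α e_on)^k) = (L:ℝ) - 1
      rw [hαe]
      simp
      push_cast [Nat.cast_sub (by omega : 1 ≤ L)]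
      ring
    have hLe : (0:ℝ) < (L:ℝ) - e_on := by
      have : (2:ℝ) ≤ (L:ℝ) := by exact_mod_cast hL
      linarith
    have hfe : f e_on = (1 - e_on) / ((L:ℝ) - e_on) := by
      show e_on*(1-e_on)/(e_on*(1-e_on) + e_on * S e_on) = (1 - e_on) / ((L:ℝ) - e_on)
      rw [hSe]
      rw [div_eq_div_iff (by nlinarith) (by linarith)]
      ring
    have hαcont : ContinuousAt α e_on := by
      apply ContinuousAt.div (by fun_prop) (by fun_prop)
      positivity
    have hScont : ContinuousAt S e_on :=
      tendsto_finset_sum _ (fun i _ => hαcont.pow i)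
    have hfcont : ContinuousAt f e_on := by
      apply ContinuousAt.div (by fun_prop)
      · exact (continuousAt_id.mul continuousAt_const).add (continuousAt_const.mul hScont)
      · rw [hSe]; nlinarith
    have htend : Tendsto f (nhdsWithin e_on (Set.Ioi e_on)) (nhds ((1 - e_on) / ((L:ℝ) - e_on))) := by
      rw [← hfe]
      exact hfcont.continuousWithinAt.tendsto
    apply htend.congr'
    filter_upwards [Ioo_mem_nhdsGT_of_mem (by constructor <;> [rfl; exact he1] : e_on ∈ Set.Ico e_on 1)] with δ hδ
    exact (hkey δ hδ).symm
end
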